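/- The function W : V^m×V→ℝ defined by W(s)=γ^{D(s)} is the unique real-valued function on V^m×V satisfying the Bellman minimax equations: W(s)=1 whenever f(s)=1, and W(s)=γ·max_{n_p∈N[s_p]} min_{n_e∈N[s_e]} W(n_p,n_e) whenever f(s)=0. -/

import Mathlib

open scoped ENat

/-- Closed neighborhood `N[v]`: stay at `v` or cross one edge of `G`. -/
def closedNbr {V : Type*} (G : SimpleGraph V) (v : V) : Set V :=
  {u | u = v ∨ G.Adj v u}

/-- Joint pursuer moves: all `m` pursuers move simultaneously, each within a
closed neighborhood. -/
def jointNbr {V : Type*} (G : SimpleGraph V) {m : ℕ} (sp : Fin m → V) :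
    Set (Fin m → V) :=
  {np | ∀ i, np i ∈ closedNbr G (sp i)}

/-- Capture sets `C_k`: `C_0 = {s | f s = 1}` and
`C_{k+1} = C_k ∪ {(s_p,s_e) | ∃ n_p ∈ N[s_p], ∀ n_e ∈ N[s_e], (n_p,n_e) ∈ C_k}`. -/
def captureSet {V : Type*} (G : SimpleGraph V) {m : ℕ}
    (f : (Fin m → V) × V → Bool) : ℕ → Set ((Fin m → V) × V)
  | 0 => {s | f s = true}
  | k + 1 => captureSet G f k ∪
      {s | ∃ np ∈ jointNbr G s.1, ∀ ne ∈ closedNbr G s.2, (np, ne) ∈ captureSet G f k}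

/-- The distance table `D(s) = min {k | s ∈ C_k}` (and `∞` if `s` lies in no `C_k`). -/
noncomputable def Dtab {V : Type*} (G : SimpleGraph V) {m : ℕ}
    (f : (Fin m → V) × V → Bool) (s : (Fin m → V) × V) : ℕ∞ :=
  sInf {k : ℕ∞ | ∃ n : ℕ, k = n ∧ s ∈ captureSet G f n}

/-- `γ^d` for `d ∈ ℕ∪{∞}`, with the convention `γ^∞ = 0`. -/
noncomputable def gpow (γ : ℝ) (d : ℕ∞) : ℝ :=
  if d = ⊤ then 0 else γ ^ d.toNat

/-!
The Bellman operator `T` is a `γ`-contraction for the sup metric, because a maximum or a minimum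
over a finite set moves by at most the sup distance of its arguments; so `T` has at most one fixed
point. The table `D` satisfies `D(s) = 1 + min_{n_p} max_{n_e} D(n_p, n_e)` on states with
`f s = 0`, and `t ↦ γ^t` is antitone, so it turns this min–max into the max–min of the Bellman
equations: `γ^D` is that fixed point.
-/

section FiniteExtrema

variable {ι : Type*} {A : Set ι}

theorem csSup_image_le_csSup_image_add (hA : A.Finite) (hne : A.Nonempty) {u w : ι → ℝ}
    {M : ℝ} (h : ∀ a ∈ A, u a ≤ w a + M) : sSup (u '' A) ≤ sSup (w '' A) + M :=
  csSup_le (hne.image u) <| Set.forall_mem_image.2 fun a ha =>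
    (h a ha).trans (add_le_add_left (le_csSup (hA.image w).bddAbove ⟨a, ha, rfl⟩) M)

theorem csInf_image_le_csInf_image_add (hA : A.Finite) (hne : A.Nonempty) {u w : ι → ℝ}
    {M : ℝ} (h : ∀ a ∈ A, u a ≤ w a + M) : sInf (u '' A) ≤ sInf (w '' A) + M :=
  sub_le_iff_le_add.1 <| le_csInf (hne.image w) <| Set.forall_mem_image.2 fun a ha =>
    sub_le_iff_le_add.2 ((csInf_le (hA.image u).bddBelow ⟨a, ha, rfl⟩).trans (h a ha))

theorem abs_csSup_image_sub_le (hA : A.Finite) (hne : A.Nonempty) {u w : ι → ℝ} {M : ℝ}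
    (h : ∀ a ∈ A, |u a - w a| ≤ M) : |sSup (u '' A) - sSup (w '' A)| ≤ M := by
  have huw := csSup_image_le_csSup_image_add (u := u) (w := w) (M := M) hA hne fun a ha => by
    linarith [(abs_sub_le_iff.1 (h a ha)).1]
  have hwu := csSup_image_le_csSup_image_add (u := w) (w := u) (M := M) hA hne fun a ha => by
    linarith [(abs_sub_le_iff.1 (h a ha)).2]
  exact abs_sub_le_iff.2 ⟨by linarith, by linarith⟩

theorem abs_csInf_image_sub_le (hA : A.Finite) (hne : A.Nonempty) {u w : ι → ℝ} {M : ℝ}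
    (h : ∀ a ∈ A, |u a - w a| ≤ M) : |sInf (u '' A) - sInf (w '' A)| ≤ M := by
  have huw := csInf_image_le_csInf_image_add (u := u) (w := w) (M := M) hA hne fun a ha => by
    linarith [(abs_sub_le_iff.1 (h a ha)).1]
  have hwu := csInf_image_le_csInf_image_add (u := w) (w := u) (M := M) hA hne fun a ha => by
    linarith [(abs_sub_le_iff.1 (h a ha)).2]
  exact abs_sub_le_iff.2 ⟨by linarith, by linarith⟩

end FiniteExtrema

section Antitone

variable {ι α β : Type*} [ConditionallyCompleteLinearOrder α] [ConditionallyCompleteLattice β]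
  {g : α → β} {d : ι → α} {A : Set ι}

theorem Antitone.csInf_image_comp_eq (hg : Antitone g) (hA : A.Finite) (hne : A.Nonempty) :
    sInf ((fun a => g (d a)) '' A) = g (sSup (d '' A)) := by
  rw [← Set.image_image]
  exact (hg.map_isGreatest ⟨(hne.image d).csSup_mem (hA.image d),
    fun _ hx => le_csSup (hA.image d).bddAbove hx⟩).csInf_eq

theorem Antitone.csSup_image_comp_eq (hg : Antitone g) (hA : A.Finite) (hne : A.Nonempty) :
    sSup ((fun a => g (d a)) '' A) = g (sInf (d '' A)) := by
  rw [← Set.image_image]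
  exact (hg.map_isLeast ⟨(hne.image d).csInf_mem (hA.image d),
    fun _ hx => csInf_le (hA.image d).bddBelow hx⟩).csSup_eq

end Antitone

section Gpow

variable {γ : ℝ}

theorem gpow_zero : gpow γ 0 = 1 := by
  simp [gpow]

theorem gpow_add_one (d : ℕ∞) : gpow γ (d + 1) = γ * gpow γ d := by
  induction d using ENat.recTopCoe with
  | top => simp [gpow]
  | coe n =>
    simp only [gpow, ← Nat.cast_add_one, ENat.natCast_ne_top, if_false, ENat.toNat_natCast]
    exact pow_succ' γ n

theorem gpow_antitone (h0 : 0 ≤ γ) (h1 : γ ≤ 1) : Antitone (gpow γ) := by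
  intro d e hde
  induction e using ENat.recTopCoe with
  | top => simp only [gpow, if_true]; split_ifs <;> positivity
  | coe n =>
    lift d to ℕ using ne_top_of_le_ne_top (ENat.natCast_ne_top n) hde
    simpa [gpow] using pow_le_pow_of_le_one h0 h1 (ENat.natCast_le_natCast.1 hde)

end Gpow

theorem ENat.sInf_le_natCast_iff {S : Set ℕ∞} {k : ℕ} : sInf S ≤ k ↔ ∃ x ∈ S, x ≤ k := by
  simp only [← ENat.lt_add_one_iff (ENat.natCast_ne_top k), sInf_lt_iff]

theorem ENat.eq_of_forall_le_natCast_iff {a b : ℕ∞} (h : ∀ k : ℕ, a ≤ k ↔ b ≤ k) : a = b :=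
  WithTop.eq_of_forall_le_coe_iff h

section CaptureSets

variable {V : Type*} (G : SimpleGraph V) {m : ℕ} (f : (Fin m → V) × V → Bool)
  {s : (Fin m → V) × V}

theorem closedNbr_nonempty (v : V) : (closedNbr G v).Nonempty :=
  ⟨v, Or.inl rfl⟩

theorem jointNbr_nonempty (sp : Fin m → V) : (jointNbr G sp).Nonempty :=
  ⟨sp, fun _ => Or.inl rfl⟩

theorem captureSet_mono : Monotone (captureSet G f) :=
  monotone_nat_of_le_succ fun _ => Set.subset_union_left

theorem mem_captureSet_add_one_iff (hs : f s = false) {n : ℕ} :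
    s ∈ captureSet G f (n + 1) ↔
      ∃ np ∈ jointNbr G s.1, ∀ ne ∈ closedNbr G s.2, (np, ne) ∈ captureSet G f n := by
  refine ⟨fun h => ?_, Or.inr⟩
  induction n with
  | zero => exact h.resolve_left (by simp [captureSet, hs])
  | succ n ih =>
    rcases h with h | h
    · obtain ⟨np, hnp, hcap⟩ := ih h
      exact ⟨np, hnp, fun ne hne => captureSet_mono G f n.le_succ (hcap ne hne)⟩
    · exact h

theorem Dtab_le_natCast_iff {k : ℕ} : Dtab G f s ≤ k ↔ s ∈ captureSet G f k := by
  refine ⟨fun h => ?_, fun h => sInf_le ⟨k, rfl, h⟩⟩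
  obtain ⟨_, ⟨n, rfl, hn⟩, hnk⟩ := ENat.sInf_le_natCast_iff.1 h
  exact captureSet_mono G f (ENat.natCast_le_natCast.1 hnk) hn

theorem Dtab_eq_zero (hs : f s = true) : Dtab G f s = 0 := by
  simpa using (Dtab_le_natCast_iff G f (k := 0)).2 hs

theorem Dtab_eq_sInf_sSup_add_one (hs : f s = false) :
    Dtab G f s = sInf ((fun np => sSup ((fun ne => Dtab G f (np, ne)) '' closedNbr G s.2)) ''
      jointNbr G s.1) + 1 := by
  refine ENat.eq_of_forall_le_natCast_iff fun k => ?_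
  rw [Dtab_le_natCast_iff]
  cases k with
  | zero => simp [captureSet, hs]
  | succ k =>
    simp only [mem_captureSet_add_one_iff G f hs, Nat.cast_add_one,
      ENat.add_le_add_iff_right ENat.one_ne_top, ENat.sInf_le_natCast_iff, Set.exists_mem_image,
      sSup_le_iff, Set.forall_mem_image, Dtab_le_natCast_iff]

end CaptureSets

section Bellman

variable {V : Type*} (G : SimpleGraph V) {m : ℕ} (f : (Fin m → V) × V → Bool) (γ : ℝ)

noncomputable def bellmanOp (W : (Fin m → V) × V → ℝ) : (Fin m → V) × V → ℝ := fun s =>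
  if f s then 1
  else γ * sSup ((fun np => sInf ((fun ne => W (np, ne)) '' closedNbr G s.2)) '' jointNbr G s.1)

theorem isFixedPt_bellmanOp_iff {W : (Fin m → V) × V → ℝ} :
    Function.IsFixedPt (bellmanOp G f γ) W ↔
      (∀ s, f s = true → W s = 1) ∧
        (∀ s : (Fin m → V) × V, f s = false →
          W s = γ * sSup {x : ℝ | ∃ np ∈ jointNbr G s.1,
            x = sInf {y : ℝ | ∃ ne ∈ closedNbr G s.2, y = W (np, ne)}}) := by
  simp only [Function.IsFixedPt, funext_iff, ← forall_and, bellmanOp]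
  refine forall_congr' fun s => ?_
  cases f s <;> simp only [Set.image, eq_comm, Bool.false_eq_true, if_true, if_false,
    true_implies, false_implies, and_true, true_and]

theorem isFixedPt_bellmanOp_gpow_Dtab [Finite V] (h0 : 0 ≤ γ) (h1 : γ ≤ 1) :
    Function.IsFixedPt (bellmanOp G f γ) fun s => gpow γ (Dtab G f s) := by
  funext s
  unfold bellmanOp
  split_ifs with hs
  · rw [Dtab_eq_zero G f hs, gpow_zero]
  · have hanti := gpow_antitone h0 h1
    rw [Dtab_eq_sInf_sSup_add_one G f (Bool.not_eq_true _ ▸ hs), gpow_add_one,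
      ← hanti.csSup_image_comp_eq (Set.toFinite _) (jointNbr_nonempty G s.1)]
    simp_rw [hanti.csInf_image_comp_eq (Set.toFinite (closedNbr G s.2)) (closedNbr_nonempty G s.2)]

theorem dist_bellmanOp_le [Fintype V] (hγ : 0 ≤ γ) (W W' : (Fin m → V) × V → ℝ) :
    dist (bellmanOp G f γ W) (bellmanOp G f γ W') ≤ γ * dist W W' := by
  refine (dist_pi_le_iff (mul_nonneg hγ dist_nonneg)).2 fun s => ?_
  unfold bellmanOp
  split_ifs
  · simpa using mul_nonneg hγ dist_nonneg
  · rw [Real.dist_eq, ← mul_sub, abs_mul, abs_of_nonneg hγ]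
    gcongr
    refine abs_csSup_image_sub_le (Set.toFinite _) (jointNbr_nonempty G s.1) fun np _ => ?_
    refine abs_csInf_image_sub_le (Set.toFinite _) (closedNbr_nonempty G s.2) fun ne _ => ?_
    exact Real.dist_eq _ _ ▸ dist_le_pi_dist W W' (np, ne)

theorem contractingWith_bellmanOp [Fintype V] (h0 : 0 ≤ γ) (h1 : γ < 1) :
    ContractingWith ⟨γ, h0⟩ (bellmanOp G f γ) :=
  ⟨h1, LipschitzWith.of_dist_le_mul (dist_bellmanOp_le G f γ h0)⟩

end Bellman

theorem bellman_unique_solution_general {V : Type*} [Fintype V] (G : SimpleGraph V)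
    (m : ℕ) (f : (Fin m → V) × V → Bool)
    (γ : ℝ) (hγ0 : 0 < γ) (hγ1 : γ < 1) (W : (Fin m → V) × V → ℝ) :
    ((∀ s, f s = true → W s = 1) ∧
      (∀ s : (Fin m → V) × V, f s = false →
        W s = γ * sSup {x : ℝ | ∃ np ∈ jointNbr G s.1,
          x = sInf {y : ℝ | ∃ ne ∈ closedNbr G s.2, y = W (np, ne)}})) ↔
    W = fun s => gpow γ (Dtab G f s) := by
  rw [← isFixedPt_bellmanOp_iff]
  have hfix := isFixedPt_bellmanOp_gpow_Dtab G f γ hγ0.le hγ1.le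
  exact ⟨fun hW => (contractingWith_bellmanOp G f γ hγ0.le hγ1).fixedPoint_unique' hW hfix,
    fun hW => hW ▸ hfix⟩

/-- The function `W(s) = γ^{D(s)}` is the unique real-valued function on states
satisfying the Bellman minimax equations: `W(s) = 1` whenever `f(s) = 1`, and
`W(s) = γ · max_{n_p ∈ N[s_p]} min_{n_e ∈ N[s_e]} W(n_p,n_e)` whenever `f(s) = 0`. -/
theorem bellman_unique_solution {V : Type*} [Fintype V] (G : SimpleGraph V)
    (m : ℕ) (hm : 1 ≤ m) (f : (Fin m → V) × V → Bool)
    (γ : ℝ) (hγ0 : 0 < γ) (hγ1 : γ < 1) (W : (Fin m → V) × V → ℝ) :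
    ((∀ s, f s = true → W s = 1) ∧
      (∀ s : (Fin m → V) × V, f s = false →
        W s = γ * sSup {x : ℝ | ∃ np ∈ jointNbr G s.1,
          x = sInf {y : ℝ | ∃ ne ∈ closedNbr G s.2, y = W (np, ne)}})) ↔
    W = fun s => gpow γ (Dtab G f s) :=
  bellman_unique_solution_general G m f γ hγ0 hγ1 W
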